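/- arXiv:2509.11603 — 5 statements merged into one kernel-verified Lean document; each statement's English description precedes it below -/
import Mathlib

section
/- In an integral residuated lattice (one where 1 is the top element), the identity x / ((x ∨ y) \ x) = x ∨ y holds if and only if the identity x / (y \ x) = x ∨ y holds (for all x, y). -/
/-- A residuated lattice: a lattice-ordered monoid with residuals `\` and `/`
satisfying the residuation equivalences. -/
class ResiduatedLattice (α : Type*) extends Lattice α, Monoid α where
  ldiv : α → α → α
  rdiv : α → α → α
  le_ldiv_iff : ∀ x y z : α, y ≤ ldiv x z ↔ x * y ≤ z
  le_rdiv_iff : ∀ x y z : α, x ≤ rdiv z y ↔ x * y ≤ z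

open ResiduatedLattice

lemma rl_mul_le_left {α : Type*} [ResiduatedLattice α] {a b : α} (c : α) (h : a ≤ b) :
    c * a ≤ c * b :=
  (le_ldiv_iff c a (c * b)).1 (h.trans ((le_ldiv_iff c b (c * b)).2 le_rfl))

lemma rl_mul_le_right {α : Type*} [ResiduatedLattice α] {a b : α} (c : α) (h : a ≤ b) :
    a * c ≤ b * c :=
  (le_rdiv_iff a c (b * c)).1 (h.trans ((le_rdiv_iff b c (b * c)).2 le_rfl))

lemma rl_ldiv_anti {α : Type*} [ResiduatedLattice α] {a b : α} (x : α) (h : a ≤ b) :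
    ldiv b x ≤ ldiv a x :=
  (le_ldiv_iff a (ldiv b x) x).2
    ((rl_mul_le_right _ h).trans ((le_ldiv_iff b (ldiv b x) x).1 le_rfl))

lemma rl_rdiv_anti {α : Type*} [ResiduatedLattice α] {a b : α} (x : α) (h : a ≤ b) :
    rdiv x b ≤ rdiv x a :=
  (le_rdiv_iff (rdiv x b) a x).2
    ((rl_mul_le_left _ h).trans ((le_rdiv_iff (rdiv x b) b x).1 le_rfl))

/-- In an integral residuated lattice, the identity `x / ((x ∨ y) \ x) = x ∨ y`
holds iff the identity `x / (y \ x) = x ∨ y` holds. -/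
theorem stmt4 {α : Type*} [ResiduatedLattice α] (hint : ∀ x : α, x ≤ 1) :
    (∀ x y : α, rdiv x (ldiv (x ⊔ y) x) = x ⊔ y) ↔
      (∀ x y : α, rdiv x (ldiv y x) = x ⊔ y) := by
  constructor
  · intro h x y
    apply le_antisymm
    · calc rdiv x (ldiv y x) ≤ rdiv x (ldiv (x ⊔ y) x) :=
            rl_rdiv_anti x (rl_ldiv_anti x le_sup_right)
        _ = x ⊔ y := h x y
    · refine sup_le ?_ ?_
      · refine (le_rdiv_iff x (ldiv y x) x).2 ?_
        calc x * ldiv y x ≤ x * 1 := rl_mul_le_left x (hint _)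
          _ = x := mul_one x
      · exact (le_rdiv_iff y (ldiv y x) x).2 ((le_ldiv_iff y (ldiv y x) x).1 le_rfl)
  · intro h x y
    rw [h x (x ⊔ y), sup_left_idem]
end

section
/- The negative cone of a lattice-ordered group, with residuals x / y := x·y⁻¹ ∧ e and y \ x := y⁻¹·x ∧ e, satisfies the Łukasiewicz identities x / (y \ x) = x ∨ y = (x / y) \ x. -/
variable {L : Type*} [Lattice L] [Group L]
  [CovariantClass L L (· * ·) (· ≤ ·)] [CovariantClass L L (Function.swap (· * ·)) (· ≤ ·)]

/-- The negative cone of an ℓ-group, with residuals `x / y = x·y⁻¹ ∧ e` and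
`y \ x = y⁻¹·x ∧ e`, satisfies the Łukasiewicz identities
`x / (y \ x) = x ∨ y = (x / y) \ x`. -/
theorem stmt6 :
    ∀ x y : L, x ≤ 1 → y ≤ 1 →
      x * (y⁻¹ * x ⊓ 1)⁻¹ ⊓ 1 = x ⊔ y ∧ (x * y⁻¹ ⊓ 1)⁻¹ * x ⊓ 1 = x ⊔ y := by
  intro x y hx hy
  have h1 : x * (y⁻¹ * x ⊓ 1)⁻¹ = x ⊔ y := by
    rw [inv_inf, mul_sup, mul_inv_rev, inv_inv, mul_inv_cancel_left, inv_one, mul_one,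
      sup_comm]
  have h2 : (x * y⁻¹ ⊓ 1)⁻¹ * x = x ⊔ y := by
    rw [inv_inf, sup_mul, mul_inv_rev, inv_inv, inv_mul_cancel_right, inv_one, one_mul,
      sup_comm]
  constructor
  · rw [h1, inf_eq_left]
    exact sup_le hx hy
  · rw [h2, inf_eq_left]
    exact sup_le hx hy
end

section
/- The class of perfect FL_w-algebras is closed under nontrivial homomorphic images: if A is perfect and f : A → B is a surjective homomorphism onto a nontrivial FL_w-algebra B, then B is perfect. -/
/-- An FL_w-algebra: an integral, 0-bounded residuated lattice,
i.e. a residuated lattice with an extra constant `0` with `0 ≤ x ≤ 1`. -/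
class FLw (α : Type*) extends Lattice α, Monoid α where
  ldiv : α → α → α
  rdiv : α → α → α
  zero : α
  le_ldiv_iff : ∀ x y z : α, y ≤ ldiv x z ↔ x * y ≤ z
  le_rdiv_iff : ∀ x y z : α, x ≤ rdiv z y ↔ x * y ≤ z
  zero_le : ∀ x : α, zero ≤ x
  le_one : ∀ x : α, x ≤ 1

open FLw

/-- A homomorphism onto the two-element Boolean algebra `2` (modelled on `Bool`,
where `&&`,`||`,`!x || y` are the operations of `2` as an FL_w-algebra),
which moreover witnesses perfectness: every element mapped to `0` lies below
every element mapped to `1`. -/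
def IsPerfectHom {α : Type*} [FLw α] (h : α → Bool) : Prop :=
  h 1 = true ∧ h (zero : α) = false ∧
  (∀ x y : α, h (x * y) = (h x && h y)) ∧
  (∀ x y : α, h (x ⊔ y) = (h x || h y)) ∧
  (∀ x y : α, h (x ⊓ y) = (h x && h y)) ∧
  (∀ x y : α, h (ldiv x y) = (!(h x) || h y)) ∧
  (∀ z y : α, h (rdiv z y) = (!(h y) || h z)) ∧
  (∀ x y : α, h x = false → h y = true → x ≤ y)

/-- Perfect FL_w-algebras are closed under nontrivial homomorphic images: if
`A` is perfect and `f : A → B` is a surjective FL_w-homomorphism onto a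
nontrivial FL_w-algebra `B`, then `B` is perfect. -/
theorem stmt12 {α β : Type*} [FLw α] [FLw β] (f : α → β)
    (hf1 : f 1 = 1) (hf0 : f (zero : α) = (zero : β))
    (hfmul : ∀ x y : α, f (x * y) = f x * f y)
    (hfsup : ∀ x y : α, f (x ⊔ y) = f x ⊔ f y)
    (hfinf : ∀ x y : α, f (x ⊓ y) = f x ⊓ f y)
    (hfld : ∀ x y : α, f (ldiv x y) = ldiv (f x) (f y))
    (hfrd : ∀ x y : α, f (rdiv x y) = rdiv (f x) (f y))
    (hsurj : Function.Surjective f)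
    (hnontriv : ∃ a b : β, a ≠ b)
    (hperf : ∃ h : α → Bool, IsPerfectHom h) :
    ∃ h' : β → Bool, IsPerfectHom h' := by
  classical
  obtain ⟨h, h1, h0, hmul, hsup, hinf, hld, hrd, hle⟩ := hperf
  have fmono : ∀ x y : α, x ≤ y → f x ≤ f y := by
    intro x y hxy
    have hs : f x ⊔ f y = f y := by rw [← hfsup, sup_eq_right.mpr hxy]
    calc f x ≤ f x ⊔ f y := le_sup_left
      _ = f y := hs
  have ldiv00 : ldiv (zero : β) (zero : β) = 1 := by
    refine le_antisymm (le_one _) ?_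
    rw [le_ldiv_iff, mul_one]
  have rdiv01 : rdiv (zero : β) (1 : β) = zero := by
    refine le_antisymm ?_ (zero_le _)
    have := (le_rdiv_iff (rdiv (zero : β) 1) 1 zero).mp le_rfl
    rwa [mul_one] at this
  have lemA : ∀ a : α, h a = true → f a ≠ zero := by
    intro a ha hfa
    have hc : h (ldiv a (zero : α)) = false := by rw [hld, ha, h0]; rfl
    have hca : ldiv a (zero : α) ≤ a := hle _ _ hc ha
    have hfc : f (ldiv a (zero : α)) = 1 := by
      rw [hfld, hf0, hfa, ldiv00]
    have h10 : (1 : β) ≤ zero := by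
      rw [← hfc, ← hfa]; exact fmono _ _ hca
    obtain ⟨b1, b2, hb⟩ := hnontriv
    exact hb (le_antisymm ((le_one b1).trans (h10.trans (zero_le b2)))
      ((le_one b2).trans (h10.trans (zero_le b1))))
  have key : ∀ x y : α, f x = f y → h x = true → h y = false → False := by
    intro x y hxy hx hy
    have hc : h (ldiv x y) = false := by rw [hld, hx, hy]; rfl
    have hfc : f (ldiv x y) = 1 := by
      rw [hfld, ← hxy]
      refine le_antisymm (le_one _) ?_
      rw [le_ldiv_iff, mul_one]
    have he : h (rdiv (zero : α) (ldiv x y)) = true := by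
      rw [hrd, hc, h0]; rfl
    have hfe : f (rdiv (zero : α) (ldiv x y)) = zero := by
      rw [hfrd, hf0, hfc, rdiv01]
    exact lemA _ he hfe
  have lemB : ∀ x y : α, f x = f y → h x = h y := by
    intro x y hxy
    cases hx : h x <;> cases hy : h y
    · rfl
    · exact absurd (key y x hxy.symm hy hx) (fun t => t)
    · exact absurd (key x y hxy hx hy) (fun t => t)
    · rfl
  refine ⟨fun b => h (hsurj b).choose, ?_⟩
  have hkey : ∀ (b : β) (x : α), f x = b → h (hsurj b).choose = h x := by
    intro b x hx
    exact lemB _ _ ((hsurj b).choose_spec.trans hx.symm)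
  refine ⟨?_, ?_, ?_, ?_, ?_, ?_, ?_, ?_⟩
  · beta_reduce; rw [hkey 1 1 hf1, h1]
  · beta_reduce; rw [hkey _ (zero : α) hf0, h0]
  · intro b1 b2
    obtain ⟨x1, rfl⟩ := hsurj b1
    obtain ⟨x2, rfl⟩ := hsurj b2
    beta_reduce
    rw [hkey _ x1 rfl, hkey _ x2 rfl, hkey _ (x1 * x2) (hfmul x1 x2), hmul]
  · intro b1 b2
    obtain ⟨x1, rfl⟩ := hsurj b1
    obtain ⟨x2, rfl⟩ := hsurj b2
    beta_reduce
    rw [hkey _ x1 rfl, hkey _ x2 rfl, hkey _ (x1 ⊔ x2) (hfsup x1 x2), hsup]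
  · intro b1 b2
    obtain ⟨x1, rfl⟩ := hsurj b1
    obtain ⟨x2, rfl⟩ := hsurj b2
    beta_reduce
    rw [hkey _ x1 rfl, hkey _ x2 rfl, hkey _ (x1 ⊓ x2) (hfinf x1 x2), hinf]
  · intro b1 b2
    obtain ⟨x1, rfl⟩ := hsurj b1
    obtain ⟨x2, rfl⟩ := hsurj b2
    beta_reduce
    rw [hkey _ x1 rfl, hkey _ x2 rfl, hkey _ (ldiv x1 x2) (hfld x1 x2), hld]
  · intro b1 b2
    obtain ⟨x1, rfl⟩ := hsurj b1
    obtain ⟨x2, rfl⟩ := hsurj b2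
    beta_reduce
    rw [hkey _ x1 rfl, hkey _ x2 rfl, hkey _ (rdiv x1 x2) (hfrd x1 x2), hrd]
  · intro b1 b2 hb1 hb2
    obtain ⟨x1, rfl⟩ := hsurj b1
    obtain ⟨x2, rfl⟩ := hsurj b2
    beta_reduce at hb1 hb2
    rw [hkey _ x1 rfl] at hb1
    rw [hkey _ x2 rfl] at hb2
    exact fmono _ _ (hle x1 x2 hb1 hb2)
end

section
/- Let A be an integral FL-algebra, F ⊆ A a normal filter, and x ∈ A. Then the set F_x = {a ∈ A : ∃ f ∈ F and iterated conjugates α₁(x), …, αₙ(x) of x with f · α₁(x) ⋯ αₙ(x) ≤ a} is the smallest normal filter containing F ∪ {x}. -/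
/-!
The residuation inequality `b · λ_b(y) ≤ y · b` lets `b` travel leftwards through a product of
left conjugates, `b · λ_b(y₁) ⋯ λ_b(yₙ) ≤ y₁ ⋯ yₙ · b`, and dually for right conjugates. So
conjugating a witness `f · y₁ ⋯ yₙ ≤ a` termwise gives a witness for the conjugate of `a`, and
`f · g · λ_g(P) · Q ≤ f · P · g · Q` gives one for a product; meets come for free because
`a · b ≤ a ⊓ b` in an integral algebra. Minimality holds since a normal filter contains all
iterated conjugates of its elements and their products.
-/

/-- An integral FL-algebra: a residuated lattice with an extra constant `0`,
in which `1` is the top element. -/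
class IntegralFL (α : Type*) extends Lattice α, Monoid α where
  ldiv : α → α → α
  rdiv : α → α → α
  zero : α
  le_ldiv_iff : ∀ x y z : α, y ≤ ldiv x z ↔ x * y ≤ z
  le_rdiv_iff : ∀ x y z : α, x ≤ rdiv z y ↔ x * y ≤ z
  le_one : ∀ x : α, x ≤ 1

open IntegralFL

/-- One conjugation step: `(true, b)` acts as the left conjugate
`λ_b(y) = b \ (y·b)`, `(false, b)` as the right conjugate `ρ_b(y) = (b·y) / b`
(in the integral case, the meet with `1` is superfluous). -/
def conjStep {α : Type*} [IntegralFL α] (p : Bool × α) (y : α) : α :=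
  if p.1 then ldiv p.2 (y * p.2) else rdiv (p.2 * y) p.2

/-- An iterated conjugate of `x`: the image of `x` under a conjugation
polynomial, encoded by a list of conjugation steps. -/
def iterConj {α : Type*} [IntegralFL α] (l : List (Bool × α)) (x : α) : α :=
  l.foldr conjStep x

/-- A normal filter: a lattice filter containing `1`, closed under products and
under all left and right conjugates. -/
def IsNormalFilter {α : Type*} [IntegralFL α] (F : Set α) : Prop :=
  (1 : α) ∈ F ∧
  (∀ a b : α, a ∈ F → a ≤ b → b ∈ F) ∧
  (∀ a b : α, a ∈ F → b ∈ F → a ⊓ b ∈ F) ∧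
  (∀ a b : α, a ∈ F → b ∈ F → a * b ∈ F) ∧
  (∀ a b : α, a ∈ F → ldiv b (a * b) ∈ F ∧ rdiv (b * a) b ∈ F)

namespace IntegralFL

variable {α : Type*} [IntegralFL α]

instance : MulLeftMono α :=
  ⟨fun a b c h => (le_ldiv_iff a b (a * c)).mp (h.trans ((le_ldiv_iff a c (a * c)).mpr le_rfl))⟩

instance : MulRightMono α :=
  ⟨fun a b c h => (le_rdiv_iff b a (c * a)).mp (h.trans ((le_rdiv_iff c a (c * a)).mpr le_rfl))⟩

def lconj (b y : α) : α := ldiv b (y * b)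

def rconj (b y : α) : α := rdiv (b * y) b

theorem mul_ldiv_le (b c : α) : b * ldiv b c ≤ c :=
  (le_ldiv_iff b (ldiv b c) c).mp le_rfl

theorem rdiv_mul_le (b c : α) : rdiv c b * b ≤ c :=
  (le_rdiv_iff (rdiv c b) b c).mp le_rfl

theorem mul_le_inf (a b : α) : a * b ≤ a ⊓ b :=
  le_inf (mul_le_of_le_one_right' (le_one b)) (mul_le_of_le_one_left' (le_one a))

theorem mul_prod_map_lconj_le (b : α) (L : List α) :
    b * (L.map (lconj b)).prod ≤ L.prod * b := by
  induction L with
  | nil => simp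
  | cons y L ih =>
    calc b * ((y :: L).map (lconj b)).prod
        = b * lconj b y * (L.map (lconj b)).prod := by simp [mul_assoc]
      _ ≤ y * b * (L.map (lconj b)).prod := mul_le_mul_left (mul_ldiv_le b _) _
      _ = y * (b * (L.map (lconj b)).prod) := mul_assoc _ _ _
      _ ≤ y * (L.prod * b) := by gcongr
      _ = (y :: L).prod * b := by simp [mul_assoc]

theorem prod_map_rconj_mul_le (b : α) (L : List α) :
    (L.map (rconj b)).prod * b ≤ b * L.prod := by
  induction L with
  | nil => simp
  | cons y L ih =>
    calc ((y :: L).map (rconj b)).prod * b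
        = rconj b y * ((L.map (rconj b)).prod * b) := by simp [mul_assoc]
      _ ≤ rconj b y * (b * L.prod) := by gcongr
      _ = rconj b y * b * L.prod := (mul_assoc _ _ _).symm
      _ ≤ b * y * L.prod := mul_le_mul_left (rdiv_mul_le b _) _
      _ = b * (y :: L).prod := by simp [mul_assoc]

end IntegralFL

namespace IsNormalFilter

variable {α : Type*} [IntegralFL α] {G : Set α}

theorem one_mem (hG : IsNormalFilter G) : (1 : α) ∈ G := hG.1

theorem mem_of_le (hG : IsNormalFilter G) {a b : α} (ha : a ∈ G) (hab : a ≤ b) : b ∈ G :=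
  hG.2.1 a b ha hab

theorem mul_mem (hG : IsNormalFilter G) {a b : α} (ha : a ∈ G) (hb : b ∈ G) : a * b ∈ G :=
  hG.2.2.2.1 a b ha hb

theorem lconj_mem (hG : IsNormalFilter G) {a : α} (ha : a ∈ G) (b : α) : lconj b a ∈ G :=
  (hG.2.2.2.2 a b ha).1

theorem rconj_mem (hG : IsNormalFilter G) {a : α} (ha : a ∈ G) (b : α) : rconj b a ∈ G :=
  (hG.2.2.2.2 a b ha).2

theorem iterConj_mem (hG : IsNormalFilter G) {x : α} (hx : x ∈ G) (l : List (Bool × α)) :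
    iterConj l x ∈ G := by
  induction l with
  | nil => exact hx
  | cons p l ih =>
    obtain ⟨_ | _, b⟩ := p
    · exact hG.rconj_mem ih b
    · exact hG.lconj_mem ih b

theorem list_prod_mem (hG : IsNormalFilter G) {L : List α} (h : ∀ y ∈ L, y ∈ G) :
    L.prod ∈ G := by
  induction L with
  | nil => exact hG.one_mem
  | cons y L ih =>
    rw [List.prod_cons]
    exact hG.mul_mem (h y List.mem_cons_self) (ih fun z hz => h z (.tail y hz))

end IsNormalFilter

section NormalFilterJoin

variable {α : Type*} [IntegralFL α]

def normalFilterJoin (F : Set α) (x : α) : Set α :=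
  {a | ∃ f ∈ F, ∃ ls : List (List (Bool × α)), f * (ls.map (fun l => iterConj l x)).prod ≤ a}

variable {F : Set α} {x : α}

theorem map_iterConj_cons_true (b : α) (ls : List (List (Bool × α))) :
    (ls.map ((true, b) :: ·)).map (iterConj · x) = (ls.map (iterConj · x)).map (lconj b) := by
  simp only [List.map_map]
  rfl

theorem map_iterConj_cons_false (b : α) (ls : List (List (Bool × α))) :
    (ls.map ((false, b) :: ·)).map (iterConj · x) = (ls.map (iterConj · x)).map (rconj b) := by
  simp only [List.map_map]
  rfl

theorem mem_normalFilterJoin_of_le {a b : α} (ha : a ∈ normalFilterJoin F x) (hab : a ≤ b) :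
    b ∈ normalFilterJoin F x := by
  obtain ⟨f, hf, ls, hle⟩ := ha
  exact ⟨f, hf, ls, hle.trans hab⟩

theorem mul_mem_normalFilterJoin (hF : IsNormalFilter F) {a b : α}
    (ha : a ∈ normalFilterJoin F x) (hb : b ∈ normalFilterJoin F x) :
    a * b ∈ normalFilterJoin F x := by
  obtain ⟨f, hf, ps, hfa⟩ := ha
  obtain ⟨g, hg, qs, hgb⟩ := hb
  refine ⟨f * g, hF.mul_mem hf hg, ps.map ((true, g) :: ·) ++ qs, ?_⟩
  set P := ps.map (iterConj · x)
  set Q := (qs.map (iterConj · x)).prod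
  rw [List.map_append, List.prod_append, map_iterConj_cons_true]
  calc f * g * ((P.map (lconj g)).prod * Q)
      = f * (g * (P.map (lconj g)).prod) * Q := by simp only [mul_assoc]
    _ ≤ f * (P.prod * g) * Q := by gcongr f * ?_ * _; exact mul_prod_map_lconj_le g P
    _ = f * P.prod * (g * Q) := by simp only [mul_assoc]
    _ ≤ a * b := mul_le_mul' hfa hgb

theorem lconj_mem_normalFilterJoin (hF : IsNormalFilter F) {a : α}
    (ha : a ∈ normalFilterJoin F x) (b : α) : lconj b a ∈ normalFilterJoin F x := by
  obtain ⟨f, hf, ps, hfa⟩ := ha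
  refine ⟨lconj b f, hF.lconj_mem hf b, ps.map ((true, b) :: ·), ?_⟩
  rw [map_iterConj_cons_true]
  refine (le_ldiv_iff b _ _).mpr ?_
  set P := ps.map (iterConj · x)
  calc b * (lconj b f * (P.map (lconj b)).prod)
      = b * ((f :: P).map (lconj b)).prod := by simp
    _ ≤ (f :: P).prod * b := mul_prod_map_lconj_le b (f :: P)
    _ ≤ a * b := by rw [List.prod_cons]; gcongr

theorem rconj_mem_normalFilterJoin (hF : IsNormalFilter F) {a : α}
    (ha : a ∈ normalFilterJoin F x) (b : α) : rconj b a ∈ normalFilterJoin F x := by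
  obtain ⟨f, hf, ps, hfa⟩ := ha
  refine ⟨rconj b f, hF.rconj_mem hf b, ps.map ((false, b) :: ·), ?_⟩
  rw [map_iterConj_cons_false]
  refine (le_rdiv_iff _ b _).mpr ?_
  set P := ps.map (iterConj · x)
  calc rconj b f * (P.map (rconj b)).prod * b
      = ((f :: P).map (rconj b)).prod * b := by simp
    _ ≤ b * (f :: P).prod := prod_map_rconj_mul_le b (f :: P)
    _ ≤ b * a := by rw [List.prod_cons]; gcongr

theorem subset_normalFilterJoin : F ⊆ normalFilterJoin F x :=
  fun a ha => ⟨a, ha, [], by simp⟩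

theorem mem_normalFilterJoin_self (hF : IsNormalFilter F) : x ∈ normalFilterJoin F x :=
  ⟨1, hF.one_mem, [[]], by simp [iterConj]⟩

theorem isNormalFilter_normalFilterJoin (hF : IsNormalFilter F) :
    IsNormalFilter (normalFilterJoin F x) :=
  ⟨subset_normalFilterJoin hF.one_mem,
    fun _ _ ha hab => mem_normalFilterJoin_of_le ha hab,
    fun a b ha hb => mem_normalFilterJoin_of_le (mul_mem_normalFilterJoin hF ha hb) (mul_le_inf a b),
    fun _ _ ha hb => mul_mem_normalFilterJoin hF ha hb,
    fun _ b ha => ⟨lconj_mem_normalFilterJoin hF ha b, rconj_mem_normalFilterJoin hF ha b⟩⟩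

theorem normalFilterJoin_subset {G : Set α} (hG : IsNormalFilter G) (hFG : F ⊆ G) (hxG : x ∈ G) :
    normalFilterJoin F x ⊆ G := by
  rintro a ⟨f, hf, ls, hle⟩
  refine hG.mem_of_le (hG.mul_mem (hFG hf) (hG.list_prod_mem ?_)) hle
  simp only [List.mem_map]
  rintro _ ⟨l, -, rfl⟩
  exact hG.iterConj_mem hxG l

end NormalFilterJoin

/-- For a normal filter `F` and an element `x` of an integral FL-algebra, the
set `F_x = {a : ∃ f ∈ F, ∃ iterated conjugates α₁(x),…,αₙ(x),
f·α₁(x)⋯αₙ(x) ≤ a}` is the smallest normal filter containing `F ∪ {x}`. -/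
theorem stmt14 {α : Type*} [IntegralFL α] (F : Set α) (hF : IsNormalFilter F) (x : α) :
    let Fx : Set α := {a : α | ∃ f ∈ F, ∃ ls : List (List (Bool × α)),
      f * (ls.map (fun l => iterConj l x)).prod ≤ a}
    IsNormalFilter Fx ∧ F ⊆ Fx ∧ x ∈ Fx ∧
      ∀ G : Set α, IsNormalFilter G → F ⊆ G → x ∈ G → Fx ⊆ G :=
  ⟨isNormalFilter_normalFilterJoin hF, subset_normalFilterJoin, mem_normalFilterJoin_self hF,
    fun _ hG hFG hxG => normalFilterJoin_subset hG hFG hxG⟩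
end

section
/- Let L be an ℓ-group and λ an automorphism of L. The generalized kite K(L, λ) (defined on L⁻ ⊎ L⁺) is a commutative algebra (i.e., a perfect MV-algebra) if and only if L is Abelian and λ is the identity map. -/
variable {L : Type*} [Lattice L] [Group L]
  [CovariantClass L L (· * ·) (· ≤ ·)] [CovariantClass L L (Function.swap (· * ·)) (· ≤ ·)]

/-- The universe of the generalised kite `K(L, λ)`: the disjoint union of the
negative cone `L⁻` and the positive cone `L⁺` of the ℓ-group `L`. -/
abbrev Kite (L : Type*) [Lattice L] [Group L] : Type _ :=
  {x : L // x ≤ 1} ⊕ {x : L // 1 ≤ x}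

/-- The constant `0` of the kite: the unit `e`, taken in the `L⁺` copy. -/
def kiteZero (L : Type*) [Lattice L] [Group L] : Kite L := Sum.inr ⟨1, le_refl 1⟩

/-- The constant `1` of the kite: the unit `e`, taken in the `L⁻` copy. -/
def kiteOne (L : Type*) [Lattice L] [Group L] : Kite L := Sum.inl ⟨1, le_refl 1⟩

/-- The left residual `x \ y` of the kite `K(L, λ)` (here `e : L ≃* L` is the
automorphism `λ`). -/
def kiteLdiv (e : L ≃* L) : Kite L → Kite L → Kite L
  | Sum.inl x, Sum.inl y => Sum.inl ⟨x.1⁻¹ * y.1 ⊓ 1, inf_le_right⟩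
  | Sum.inr _, Sum.inl _ => Sum.inl ⟨1, le_refl 1⟩
  | Sum.inl x, Sum.inr y => Sum.inr ⟨(e x.1)⁻¹ * y.1 ⊔ 1, le_sup_right⟩
  | Sum.inr x, Sum.inr y => Sum.inl ⟨x.1⁻¹ * y.1 ⊓ 1, inf_le_right⟩

/-- The right residual `y / x` of the kite `K(L, λ)` (first argument `y`,
second argument `x`). -/
def kiteRdiv (e : L ≃* L) : Kite L → Kite L → Kite L
  | Sum.inl y, Sum.inl x => Sum.inl ⟨y.1 * x.1⁻¹ ⊓ 1, inf_le_right⟩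
  | Sum.inl _, Sum.inr _ => Sum.inl ⟨1, le_refl 1⟩
  | Sum.inr y, Sum.inl x => Sum.inr ⟨y.1 * x.1⁻¹ ⊔ 1, le_sup_right⟩
  | Sum.inr y, Sum.inr x => Sum.inl ⟨e.symm (y.1 * x.1⁻¹) ⊓ 1, inf_le_right⟩

/-- The multiplication `⊙` of the kite `K(L, λ)`. -/
def kiteMul (e : L ≃* L) : Kite L → Kite L → Kite L
  | Sum.inl x, Sum.inl y => Sum.inl ⟨x.1 * y.1, mul_le_one' x.2 y.2⟩
  | Sum.inl x, Sum.inr y => Sum.inr ⟨e x.1 * y.1 ⊔ 1, le_sup_right⟩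
  | Sum.inr x, Sum.inl y => Sum.inr ⟨x.1 * y.1 ⊔ 1, le_sup_right⟩
  | Sum.inr _, Sum.inr _ => Sum.inr ⟨1, le_refl 1⟩

lemma kite_pos_neg (x : L) : (x ⊔ 1) * (x ⊓ 1) = x := by
  have h1 : x * (x⁻¹ ⊔ 1) = x ⊔ 1 := by rw [mul_sup, mul_inv_cancel, mul_one, sup_comm]
  have h2 : (x⁻¹ ⊔ 1)⁻¹ = x ⊓ 1 := by rw [inv_sup, inv_inv, inv_one]
  calc (x ⊔ 1) * (x ⊓ 1) = x * (x⁻¹ ⊔ 1) * (x⁻¹ ⊔ 1)⁻¹ := by rw [h1, h2]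
    _ = x := by rw [mul_assoc, mul_inv_cancel, mul_one]


/-- The kite `K(L, λ)` is commutative (i.e. a perfect MV-algebra) iff `L` is
Abelian and `λ` is the identity map. -/
theorem stmt16 (e : L ≃* L) (he : ∀ x y : L, x ≤ y ↔ e x ≤ e y) :
    (∀ a b : Kite L, kiteMul e a b = kiteMul e b a) ↔
      ((∀ x y : L, x * y = y * x) ∧ ∀ x : L, e x = x) := by
  constructor
  · intro h
    -- negatives commute
    have hneg : ∀ a b : L, a ≤ 1 → b ≤ 1 → a * b = b * a := by
      intro a b ha hb
      have := h (Sum.inl ⟨a, ha⟩) (Sum.inl ⟨b, hb⟩)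
      simpa [kiteMul, Subtype.ext_iff] using this
    have hcomm : ∀ x y : L, x * y = y * x := by
      intro x y
      have hx : x = (x⁻¹ ⊓ 1)⁻¹ * (x ⊓ 1) := by
        rw [inv_inf, inv_inv, inv_one, kite_pos_neg]
      have hy : y = (y⁻¹ ⊓ 1)⁻¹ * (y ⊓ 1) := by
        rw [inv_inf, inv_inv, inv_one, kite_pos_neg]
      have key : ∀ a b : L, a ≤ 1 → b ≤ 1 → Commute a b := fun a b ha hb =>
        hneg a b ha hb
      have c1 : Commute ((x⁻¹ ⊓ 1)⁻¹ * (x ⊓ 1)) ((y⁻¹ ⊓ 1)⁻¹ * (y ⊓ 1)) := by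
        refine Commute.mul_left ?_ ?_ <;> refine Commute.mul_right ?_ ?_ <;>
          first
          | exact (key _ _ inf_le_right inf_le_right).inv_left.inv_right
          | exact (key _ _ inf_le_right inf_le_right).inv_left
          | exact (key _ _ inf_le_right inf_le_right).inv_right
          | exact key _ _ inf_le_right inf_le_right
      rw [hx, hy]; exact c1
    refine ⟨hcomm, ?_⟩
    -- e fixes negatives
    have hfix : ∀ x : L, x ≤ 1 → e x = x := by
      intro x hx
      set y : L := (e x)⁻¹ ⊔ x⁻¹ ⊔ 1 with hy
      have hy1 : (1 : L) ≤ y := le_sup_right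
      have := h (Sum.inl ⟨x, hx⟩) (Sum.inr ⟨y, hy1⟩)
      simp only [kiteMul, Sum.inr.injEq, Subtype.mk.injEq] at this
      have h1 : (1 : L) ≤ e x * y := by
        calc (1 : L) = e x * (e x)⁻¹ := (mul_inv_cancel _).symm
          _ ≤ e x * y := by
              exact mul_le_mul_right (le_trans le_sup_left le_sup_left) _
      have h2 : (1 : L) ≤ y * x := by
        rw [hcomm y x]
        calc (1 : L) = x * x⁻¹ := (mul_inv_cancel _).symm
          _ ≤ x * y := mul_le_mul_right (le_trans le_sup_right le_sup_left) _
      rw [sup_eq_left.mpr h1, sup_eq_left.mpr h2, hcomm y x] at this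
      exact mul_right_cancel this
    intro x
    have h1 : e (x ⊓ 1) = x ⊓ 1 := hfix _ inf_le_right
    have h2 : e (x ⊔ 1) = x ⊔ 1 := by
      have : x ⊔ 1 = (x⁻¹ ⊓ 1)⁻¹ := by rw [inv_inf, inv_inv, inv_one]
      rw [this, map_inv, hfix _ inf_le_right]
    calc e x = e ((x ⊔ 1) * (x ⊓ 1)) := by rw [kite_pos_neg]
      _ = x := by rw [map_mul, h1, h2, kite_pos_neg]
  · rintro ⟨hc, hid⟩ a b
    rcases a with a | a <;> rcases b with b | b <;>
      simp [kiteMul, hid, hc a.1 b.1]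
end
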